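/- arXiv:1102.0358 — 2 statements merged into one kernel-verified Lean document; each statement's English description precedes it below -/
import Mathlib

section
/- Let λ₁, λ₂, λ₃, λ₄ be real numbers and v = (v₁, v₂, v₃, v₄) a vector in ℝ⁴ such that for all indices i ≠ j in {1,2,3,4}, v_i · (R - 3λ_j - λ_i) = 0, where R = λ₁ + λ₂ + λ₃ + λ₄. If at least two components of v are nonzero, then λ₁ = λ₂ = λ₃ = λ₄. -/
/-!
If `v i ≠ 0`, the equations indexed by `i` say that `3 λ k = R - λ i` for every `k ≠ i`, so all
`λ k` with `k ≠ i` coincide. With a second index `j ≠ i` with `v j ≠ 0`, subtracting the equations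
for the pairs `(i, j)` and `(j, i)` gives `2 (λ i - λ j) = 0`, so `λ i` joins the common value.
-/

section

variable {ι K : Type*} [Field K] [CharZero K] {R : K} {lam v : ι → K}

theorem eq_of_mul_sub_three_mul_sub_eq_zero
    (h : ∀ i j, i ≠ j → v i * (R - 3 * lam j - lam i) = 0)
    {i j : ι} (hij : i ≠ j) (hvi : v i ≠ 0) (hvj : v j ≠ 0) (k : ι) :
    lam k = lam j := by
  have hi : ∀ k, k ≠ i → R - 3 * lam k - lam i = 0 := fun k hk =>
    (mul_eq_zero.mp (h i k hk.symm)).resolve_left hvi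
  have hji : R - 3 * lam i - lam j = 0 := (mul_eq_zero.mp (h j i hij.symm)).resolve_left hvj
  have hij' := hi j hij.symm
  by_cases hk : k = i
  · subst hk
    linear_combination (hij' - hji) / 2
  · linear_combination (hij' - hi k hk) / 3

end

/-- Key algebraic step in Lemma 2.1: if the eigenvalue system
`v i * (R - 3 λ j - λ i) = 0` holds for all `i ≠ j` (with `R = Σ λ k`)
and at least two components of `v` are nonzero, then all eigenvalues coincide. -/
theorem eigenvalues_all_equal_of_two_nonzero_components
    (lam v : Fin 4 → ℝ)
    (h : ∀ i j : Fin 4, i ≠ j → v i * ((∑ k, lam k) - 3 * lam j - lam i) = 0)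
    (hv : ∃ i j : Fin 4, i ≠ j ∧ v i ≠ 0 ∧ v j ≠ 0) :
    ∀ i j : Fin 4, lam i = lam j := by
  obtain ⟨i, j, hij, hvi, hvj⟩ := hv
  intro a b
  rw [eq_of_mul_sub_three_mul_sub_eq_zero h hij hvi hvj a,
    eq_of_mul_sub_three_mul_sub_eq_zero h hij hvi hvj b]
end

section
/- Let W be a 4-tensor on ℝ⁴ which is antisymmetric in its first two and in its last two arguments, satisfies the pair-symmetry W(x,y,z,w) = W(z,w,x,y), and satisfies the anti-self-duality relations W(e₁,e₂,x,y) = -W(e₃,e₄,x,y), W(e₁,e₃,x,y) = -W(e₄,e₂,x,y), W(e₁,e₄,x,y) = -W(e₂,e₃,x,y) in both index pairs. If W(e₁, e_a, e_b, e_c) = 0 for all a, b, c ∈ {2,3,4}, then W is identically zero. -/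
/-!
For fixed `x y`, the components `W x y (e k) (e l)` form an anti-self-dual bivector in `k l`, and
likewise in the first pair. An anti-self-dual bivector on `Fin 4` is determined by its row `0`
(each `g 0 a` equals `-g b c` for the complementary pair `b c`), and conversely that row is
determined by the spatial block `g b c`, `b c ≠ 0`. Applied in the last pair, the hypothesis kills
every `W (e 0) (e a) _ _`; applied in the first pair, this kills everything.
-/

/-- Indices `0, 1, 2, 3` stand for the paper's `e₁, …, e₄`. -/
structure IsAntiSelfDual {R : Type*} [Neg R] (g : Fin 4 → Fin 4 → R) : Prop where
  antisymm : ∀ i j, g i j = -g j i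
  dual₁ : g 0 1 = -g 2 3
  dual₂ : g 0 2 = -g 3 1
  dual₃ : g 0 3 = -g 1 2

namespace IsAntiSelfDual

variable {R : Type*} [Ring R] [NoZeroDivisors R] [CharZero R] {g : Fin 4 → Fin 4 → R}

theorem apply_self (hg : IsAntiSelfDual g) (i : Fin 4) : g i i = 0 :=
  CharZero.eq_neg_self_iff.mp (hg.antisymm i i)

theorem eq_zero_of_row_zero (hg : IsAntiSelfDual g) (h : ∀ a, g 0 a = 0) (i j : Fin 4) :
    g i j = 0 := by
  have h₂₃ : g 2 3 = 0 := by rw [← neg_eq_zero, ← hg.dual₁, h]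
  have h₃₁ : g 3 1 = 0 := by rw [← neg_eq_zero, ← hg.dual₂, h]
  have h₁₂ : g 1 2 = 0 := by rw [← neg_eq_zero, ← hg.dual₃, h]
  have hrev : ∀ i j, g j i = 0 → g i j = 0 := fun i j hji => by rw [hg.antisymm, hji, neg_zero]
  fin_cases i <;> fin_cases j <;>
    first
    | exact hg.apply_self _
    | exact h _
    | exact hrev _ _ (h _)
    | assumption
    | exact hrev _ _ ‹_›

theorem eq_zero_of_spatial_zero (hg : IsAntiSelfDual g)
    (h : ∀ a b, a ≠ 0 → b ≠ 0 → g a b = 0) (i j : Fin 4) : g i j = 0 := by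
  refine hg.eq_zero_of_row_zero (fun a => ?_) i j
  obtain rfl | rfl | rfl | rfl : a = 0 ∨ a = 1 ∨ a = 2 ∨ a = 3 := by omega
  · exact hg.apply_self 0
  · rw [hg.dual₁, h 2 3 (by decide) (by decide), neg_zero]
  · rw [hg.dual₂, h 3 1 (by decide) (by decide), neg_zero]
  · rw [hg.dual₃, h 1 2 (by decide) (by decide), neg_zero]

end IsAntiSelfDual

theorem antiSelfDual_weyl_vanishes_general
    (W : (Fin 4 → ℝ) → (Fin 4 → ℝ) → (Fin 4 → ℝ) → (Fin 4 → ℝ) → ℝ)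
    (e : Fin 4 → (Fin 4 → ℝ))
    (hanti₁ : ∀ x y z w, W x y z w = - W y x z w)
    (hanti₂ : ∀ x y z w, W x y z w = - W x y w z)
    (hd1 : ∀ x y, W (e 0) (e 1) x y = - W (e 2) (e 3) x y)
    (hd2 : ∀ x y, W (e 0) (e 2) x y = - W (e 3) (e 1) x y)
    (hd3 : ∀ x y, W (e 0) (e 3) x y = - W (e 1) (e 2) x y)
    (hd1' : ∀ x y, W x y (e 0) (e 1) = - W x y (e 2) (e 3))
    (hd2' : ∀ x y, W x y (e 0) (e 2) = - W x y (e 3) (e 1))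
    (hd3' : ∀ x y, W x y (e 0) (e 3) = - W x y (e 1) (e 2))
    (h0 : ∀ a b c : Fin 4, a ≠ 0 → b ≠ 0 → c ≠ 0 → W (e 0) (e a) (e b) (e c) = 0) :
    ∀ i j k l : Fin 4, W (e i) (e j) (e k) (e l) = 0 := by
  have hlast : ∀ x y, IsAntiSelfDual fun k l => W x y (e k) (e l) := fun x y =>
    ⟨fun _ _ => hanti₂ _ _ _ _, hd1' x y, hd2' x y, hd3' x y⟩
  have hfirst : ∀ k l, IsAntiSelfDual fun i j => W (e i) (e j) (e k) (e l) := fun k l =>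
    ⟨fun _ _ => hanti₁ _ _ _ _, hd1 _ _, hd2 _ _, hd3 _ _⟩
  have hrow : ∀ a k l, W (e 0) (e a) (e k) (e l) = 0 := by
    intro a
    by_cases ha : a = 0
    · subst ha
      exact fun k l => (hfirst k l).apply_self 0
    · exact (hlast _ _).eq_zero_of_spatial_zero (h0 a · · ha)
  exact fun i j k l => (hfirst k l).eq_zero_of_row_zero (hrow · k l) i j

/-- Lemma 2.3 (multilinear-algebra level): an algebraic Weyl tensor on ℝ⁴ that is
antisymmetric in each index pair, symmetric under exchange of the pairs, and
anti-self-dual in both pairs, vanishes identically as soon as all components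
`W(e₁, e_a, e_b, e_c)` with `a, b, c ∈ {2,3,4}` vanish. -/
theorem antiSelfDual_weyl_vanishes
    (W : (Fin 4 → ℝ) → (Fin 4 → ℝ) → (Fin 4 → ℝ) → (Fin 4 → ℝ) → ℝ)
    (e : Fin 4 → (Fin 4 → ℝ)) (he : ∀ i, e i = Pi.single i 1)
    (hanti₁ : ∀ x y z w, W x y z w = - W y x z w)
    (hanti₂ : ∀ x y z w, W x y z w = - W x y w z)
    (hpair : ∀ x y z w, W x y z w = W z w x y)
    (hd1 : ∀ x y, W (e 0) (e 1) x y = - W (e 2) (e 3) x y)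
    (hd2 : ∀ x y, W (e 0) (e 2) x y = - W (e 3) (e 1) x y)
    (hd3 : ∀ x y, W (e 0) (e 3) x y = - W (e 1) (e 2) x y)
    (hd1' : ∀ x y, W x y (e 0) (e 1) = - W x y (e 2) (e 3))
    (hd2' : ∀ x y, W x y (e 0) (e 2) = - W x y (e 3) (e 1))
    (hd3' : ∀ x y, W x y (e 0) (e 3) = - W x y (e 1) (e 2))
    (h0 : ∀ a b c : Fin 4, a ≠ 0 → b ≠ 0 → c ≠ 0 → W (e 0) (e a) (e b) (e c) = 0) :
    ∀ i j k l : Fin 4, W (e i) (e j) (e k) (e l) = 0 :=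
  antiSelfDual_weyl_vanishes_general W e hanti₁ hanti₂ hd1 hd2 hd3 hd1' hd2' hd3' h0
end
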